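/- Let n ≥ 3, ε > 0, α = α(n) the positive root of α^2+(n-1)α-(n-2)=0, and β ∈ R. Set U(r) := r^β (ε + r^2)^{(α-β)/2} and L U := U'' + ((n-2)/r + 2r/(ε+r^2)) U' - (n-2)/r^2 · U. Then for all r ∈ (0,1), L U(r) = r^{β-2}(ε+r^2)^{(α-β)/2} · p(r^2/(ε+r^2)), where p(x) := (β-α)^2 x^2 + [(2β+n-1)(α-β) + 2β] x + (n-2+β)(β-1). -/

import Mathlib

noncomputable def L (n : ℕ) (ε : ℝ) (V : ℝ → ℝ) (r : ℝ) : ℝ :=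
  deriv (deriv V) r + (((n : ℝ) - 2) / r + 2 * r / (ε + r ^ 2)) * deriv V r
    - ((n : ℝ) - 2) / r ^ 2 * V r

theorem L_U_formula (n : ℕ) (hn : 3 ≤ n) (ε : ℝ) (hε : 0 < ε) (α β : ℝ)
    (hα : 0 < α) (hroot : α ^ 2 + ((n : ℝ) - 1) * α - ((n : ℝ) - 2) = 0) :
    ∀ r ∈ Set.Ioo (0 : ℝ) 1,
      L n ε (fun r => r ^ β * (ε + r ^ 2) ^ ((α - β) / 2)) r =
        r ^ (β - 2) * (ε + r ^ 2) ^ ((α - β) / 2) *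
          ((β - α) ^ 2 * (r ^ 2 / (ε + r ^ 2)) ^ 2
            + ((2 * β + (n : ℝ) - 1) * (α - β) + 2 * β) * (r ^ 2 / (ε + r ^ 2))
            + ((n : ℝ) - 2 + β) * (β - 1)) := by
  intro r hr0
  obtain ⟨hr, -⟩ := hr0
  set γ : ℝ := (α - β) / 2 with hγ
  have hs : ∀ x : ℝ, 0 < ε + x ^ 2 := fun x => by positivity
  -- derivative of V at any positive point
  have hV : ∀ x : ℝ, 0 < x → HasDerivAt (fun y : ℝ => y ^ β * (ε + y ^ 2) ^ γ)
      (β * x ^ (β - 1) * (ε + x ^ 2) ^ γ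
        + 2 * γ * x ^ (β + 1) * (ε + x ^ 2) ^ (γ - 1)) x := by
    intro x hx
    have h1 : HasDerivAt (fun y : ℝ => y ^ β) (β * x ^ (β - 1)) x :=
      Real.hasDerivAt_rpow_const (Or.inl hx.ne')
    have h2 : HasDerivAt (fun y : ℝ => ε + y ^ 2) (2 * x) x := by
      simpa using (hasDerivAt_pow 2 x).const_add ε
    have h3 : HasDerivAt (fun y : ℝ => (ε + y ^ 2) ^ γ)
        ((2 * x) * γ * (ε + x ^ 2) ^ (γ - 1)) x :=
      h2.rpow_const (Or.inl (hs x).ne')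
    have := h1.mul h3
    refine this.congr_deriv ?_
    rw [show β + 1 = β + 1 from rfl, Real.rpow_add_one hx.ne' β]
    ring
  -- clean form of the derivative
  set W1 : ℝ → ℝ := fun x => β * x ^ (β - 1) * (ε + x ^ 2) ^ γ
      + 2 * γ * x ^ (β + 1) * (ε + x ^ 2) ^ (γ - 1) with hW1def
  have hdV : deriv (fun y : ℝ => y ^ β * (ε + y ^ 2) ^ γ) =ᶠ[nhds r] W1 :=
    Filter.eventually_of_mem (isOpen_Ioi.mem_nhds hr) (fun x hx => (hV x hx).deriv)
  -- derivative of W1 at r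
  have hW1 : HasDerivAt W1
      (β * ((β - 1) * r ^ (β - 1 - 1)) * (ε + r ^ 2) ^ γ
        + β * r ^ (β - 1) * ((2 * r) * γ * (ε + r ^ 2) ^ (γ - 1))
        + ((2 * γ * ((β + 1) * r ^ (β + 1 - 1))) * (ε + r ^ 2) ^ (γ - 1)
        + 2 * γ * r ^ (β + 1) * ((2 * r) * (γ - 1) * (ε + r ^ 2) ^ (γ - 1 - 1)))) r := by
    have h2 : HasDerivAt (fun y : ℝ => ε + y ^ 2) (2 * r) r := by
      simpa using (hasDerivAt_pow 2 r).const_add ε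
    have ta : HasDerivAt (fun y : ℝ => β * y ^ (β - 1)) (β * ((β - 1) * r ^ (β - 1 - 1))) r :=
      (Real.hasDerivAt_rpow_const (Or.inl hr.ne')).const_mul β
    have tb : HasDerivAt (fun y : ℝ => (ε + y ^ 2) ^ γ)
        ((2 * r) * γ * (ε + r ^ 2) ^ (γ - 1)) r := h2.rpow_const (Or.inl (hs r).ne')
    have tc : HasDerivAt (fun y : ℝ => 2 * γ * y ^ (β + 1))
        (2 * γ * ((β + 1) * r ^ (β + 1 - 1))) r :=
      (Real.hasDerivAt_rpow_const (Or.inl hr.ne')).const_mul (2 * γ)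
    have td : HasDerivAt (fun y : ℝ => (ε + y ^ 2) ^ (γ - 1))
        ((2 * r) * (γ - 1) * (ε + r ^ 2) ^ (γ - 1 - 1)) r :=
      h2.rpow_const (Or.inl (hs r).ne')
    exact (ta.mul tb).add (tc.mul td)
  have hd1 : deriv (fun y : ℝ => y ^ β * (ε + y ^ 2) ^ γ) r = W1 r := (hV r hr).deriv
  have hd2 : deriv (deriv (fun y : ℝ => y ^ β * (ε + y ^ 2) ^ γ)) r
      = β * ((β - 1) * r ^ (β - 1 - 1)) * (ε + r ^ 2) ^ γ
        + β * r ^ (β - 1) * ((2 * r) * γ * (ε + r ^ 2) ^ (γ - 1))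
        + ((2 * γ * ((β + 1) * r ^ (β + 1 - 1))) * (ε + r ^ 2) ^ (γ - 1)
        + 2 * γ * r ^ (β + 1) * ((2 * r) * (γ - 1) * (ε + r ^ 2) ^ (γ - 1 - 1))) := by
    rw [hdV.deriv_eq]
    exact hW1.deriv
  -- unfold L and substitute
  unfold L
  rw [hd1, hd2, hW1def]
  simp only []
  -- normalize exponents
  have e1 : β - 1 - 1 = β - 2 := by ring
  have e2 : β + 1 - 1 = β - 2 + 1 + 1 := by ring
  have e3 : γ - 1 - 1 = γ - 2 := by ring
  rw [e1, e2, e3]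
  have hrne := hr.ne'
  have hsne := (hs r).ne'
  have hb1 : r ^ (β - 1) = r ^ (β - 2) * r := by
    rw [← Real.rpow_add_one hrne]; congr 1; ring
  have hb0 : r ^ β = r ^ (β - 2) * r * r := by
    rw [← Real.rpow_add_one hrne, ← Real.rpow_add_one hrne]; congr 1; ring
  have hb2 : r ^ (β + 1) = r ^ (β - 2) * r * r * r := by
    rw [← Real.rpow_add_one hrne, ← Real.rpow_add_one hrne, ← Real.rpow_add_one hrne]
    congr 1; ring
  have hb3 : r ^ (β - 2 + 1 + 1) = r ^ (β - 2) * r * r := by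
    rw [Real.rpow_add_one hrne, Real.rpow_add_one hrne]
  have hc1 : (ε + r ^ 2) ^ (γ - 1) = (ε + r ^ 2) ^ (γ - 2) * (ε + r ^ 2) := by
    rw [← Real.rpow_add_one hsne]; congr 1; ring
  have hc0 : (ε + r ^ 2) ^ γ = (ε + r ^ 2) ^ (γ - 2) * (ε + r ^ 2) * (ε + r ^ 2) := by
    rw [← Real.rpow_add_one hsne, ← Real.rpow_add_one hsne]; congr 1; ring
  rw [hb1, hb0, hb2, hb3, hc1, hc0]
  simp only [hγ]
  field_simp
  ring
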